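/- arXiv:math/0410442 — 2 statements merged into one kernel-verified Lean document; each statement's English description precedes it below -/
import Mathlib

section
/- If the affine semigroup N·A is the gluing of N·A^{E_1} and N·A^{E_2}, then the cone pos(A) is the direct sum of the cones pos(A^{E_1}) and pos(A^{E_2}). -/
open scoped BigOperators

/-- The cone of nonnegative rational combinations of elements of `S`. -/
def posSpan {n : ℕ} (S : Set (Fin n → ℚ)) : Set (Fin n → ℚ) :=
  {x | ∃ (k : ℕ) (c : Fin k → ℚ) (b : Fin k → (Fin n → ℚ)),
    (∀ i, 0 ≤ c i) ∧ (∀ i, b i ∈ S) ∧ x = ∑ i, c i • b i}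

/-- A rational polyhedral cone: `posSpan` of a finite set. -/
def IsPolyCone {n : ℕ} (σ : Set (Fin n → ℚ)) : Prop :=
  ∃ B : Finset (Fin n → ℚ), σ = posSpan (B : Set (Fin n → ℚ))

/-- A cone is strongly convex if `σ ∩ (-σ) = {0}`. -/
def StronglyConvex {n : ℕ} (σ : Set (Fin n → ℚ)) : Prop :=
  ∀ x, x ∈ σ → -x ∈ σ → x = 0

/-- dot product in `ℚ^n`. -/
def dotQ {n : ℕ} (c x : Fin n → ℚ) : ℚ := ∑ i, c i * x i

/-- `R` is an extreme ray of `σ`: a one-dimensional face cut out by a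
supporting vector `c`. -/
def IsExtremeRay {n : ℕ} (σ R : Set (Fin n → ℚ)) : Prop :=
  ∃ c : Fin n → ℚ, (∀ x ∈ σ, 0 ≤ dotQ c x) ∧
    R = {x ∈ σ | dotQ c x = 0} ∧
    Module.finrank ℚ (Submodule.span ℚ R) = 1

/-- The dimension of a cone: dimension of its rational linear span. -/
noncomputable def coneDim {n : ℕ} (σ : Set (Fin n → ℚ)) : ℕ :=
  Module.finrank ℚ (Submodule.span ℚ σ)

/-- `σ` is the direct sum of `σ₁` and `σ₂` along `a`. -/
def IsDirectSumAlong {n : ℕ} (σ₁ σ₂ σ : Set (Fin n → ℚ)) (a : Fin n → ℚ) : Prop :=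
  a ∈ σ₁ ∩ σ₂ ∧
  Submodule.span ℚ σ₁ ⊓ Submodule.span ℚ σ₂ = Submodule.span ℚ {a} ∧
  σ = posSpan (σ₁ ∪ σ₂)

/-- `σ` is a direct sum of `σ₁` and `σ₂`. -/
def IsDirectSum {n : ℕ} (σ₁ σ₂ σ : Set (Fin n → ℚ)) : Prop :=
  ∃ a, IsDirectSumAlong σ₁ σ₂ σ a

/-- `a` lies on an extreme ray of `σ`. -/
def OnExtremeRay {n : ℕ} (σ : Set (Fin n → ℚ)) (a : Fin n → ℚ) : Prop :=
  ∃ R, IsExtremeRay σ R ∧ a ∈ R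

/-- The ray `ℚ⁺ r`. -/
def rayOf {n : ℕ} (r : Fin n → ℚ) : Set (Fin n → ℚ) :=
  {x | ∃ q : ℚ, 0 ≤ q ∧ x = q • r}

/-- Coordinatewise cast of an integer vector to a rational vector. -/
def ratify {n : ℕ} (v : Fin n → ℤ) : Fin n → ℚ := fun j => (v j : ℚ)

/-- The subsemigroup (submonoid) of ℤ^n generated by a set. -/
def natSpan {n : ℕ} (A : Set (Fin n → ℤ)) : AddSubmonoid (Fin n → ℤ) :=
  AddSubmonoid.closure A

/-- The subgroup of ℤ^n generated by a set. -/
def intSpan {n : ℕ} (A : Set (Fin n → ℤ)) : AddSubgroup (Fin n → ℤ) :=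
  AddSubgroup.closure A

/-- The semigroup generated by `A` has no invertible elements (is affine). -/
def IsAffineSemigroup {n : ℕ} (A : Set (Fin n → ℤ)) : Prop :=
  ∀ x ∈ natSpan A, -x ∈ natSpan A → x = 0

/-- `ℕ(A₁ ∪ A₂)` is the gluing of `ℕA₁` and `ℕA₂`. -/
def IsGluing {n : ℕ} (A₁ A₂ : Set (Fin n → ℤ)) : Prop :=
  ∃ a : Fin n → ℤ, a ≠ 0 ∧ a ∈ natSpan A₁ ⊓ natSpan A₂ ∧
    intSpan {a} = intSpan A₁ ⊓ intSpan A₂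

/-- `ℕ(A₁ ∪ A₂)` is the s-gluing of `ℕA₁` and `ℕA₂`. -/
def IsSGluing {n : ℕ} (A₁ A₂ : Set (Fin n → ℤ)) : Prop :=
  ∃ a : Fin n → ℤ, intSpan {a} = intSpan A₁ ⊓ intSpan A₂ ∧
    ∃ t : ℕ, 0 < t ∧ (t : ℤ) • a ∈ natSpan A₁ ⊓ natSpan A₂

/-- The gcd of the coordinates of an integer vector. -/
def coordGcd {n : ℕ} (a : Fin n → ℤ) : ℕ :=
  Finset.univ.gcd fun i => (a i).natAbs

/-!
Clearing denominators shows that two ℚ-spans of integer vectors meet exactly in the ℚ-span of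
the intersection of the lattices the vectors generate. For a gluing this lattice intersection
is `ℤa`, so the linear spans of the two cones meet in `ℚa`; and the cone generated by the union
of the two cones is the cone of `A`, because `E₁ ∪ E₂` exhausts the indices.
-/

open Submodule

section Cones

variable {n : ℕ}

theorem posSpan_eq_hull (S : Set (Fin n → ℚ)) : posSpan S = PointedCone.hull ℚ S := by
  ext x
  rw [SetLike.mem_coe, mem_span_set']
  constructor
  · rintro ⟨k, c, b, hc, hb, rfl⟩
    exact ⟨k, fun i => ⟨c i, hc i⟩, fun i => ⟨b i, hb i⟩, rfl⟩
  · rintro ⟨k, c, b, rfl⟩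
    exact ⟨k, fun i => c i, fun i => b i, fun i => (c i).2, fun i => (b i).2, rfl⟩

theorem posSpan_union_posSpan (S T : Set (Fin n → ℚ)) :
    posSpan (posSpan S ∪ posSpan T) = posSpan (S ∪ T) := by
  simp only [posSpan_eq_hull, span_union, span_eq]

theorem span_posSpan (S : Set (Fin n → ℚ)) : span ℚ (posSpan S) = span ℚ S := by
  rw [posSpan_eq_hull, span_span_of_tower]

end Cones

section Ratify

variable {n : ℕ}

theorem ratify_injective : Function.Injective (ratify : (Fin n → ℤ) → Fin n → ℚ) :=
  fun _ _ h => funext fun j => Int.cast_injective (congrFun h j)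

@[simp] theorem ratify_zero : ratify (0 : Fin n → ℤ) = 0 := by
  funext j; simp [ratify]

@[simp] theorem ratify_neg (v : Fin n → ℤ) : ratify (-v) = -ratify v := by
  funext j; simp [ratify]

@[simp] theorem ratify_add (v w : Fin n → ℤ) : ratify (v + w) = ratify v + ratify w := by
  funext j; simp [ratify]

@[simp] theorem ratify_zsmul (k : ℤ) (v : Fin n → ℤ) :
    ratify (k • v) = (k : ℚ) • ratify v := by
  funext j; simp [ratify]

theorem ratify_mem_posSpan {A : Set (Fin n → ℤ)} {x : Fin n → ℤ} (hx : x ∈ natSpan A) :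
    ratify x ∈ posSpan (ratify '' A) := by
  rw [posSpan_eq_hull]
  induction hx using AddSubmonoid.closure_induction with
  | mem y hy => exact subset_span (Set.mem_image_of_mem ratify hy)
  | zero => simp
  | add x y _ _ hx hy => simpa using add_mem hx hy

theorem ratify_mem_span {A : Set (Fin n → ℤ)} {x : Fin n → ℤ} (hx : x ∈ intSpan A) :
    ratify x ∈ span ℚ (ratify '' A) := by
  induction hx using AddSubgroup.closure_induction with
  | mem y hy => exact subset_span (Set.mem_image_of_mem ratify hy)
  | zero => simp
  | add x y _ _ hx hy => simpa using add_mem hx hy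
  | neg x _ hx => simpa using neg_mem hx

theorem span_ratify_intSpan (A : Set (Fin n → ℤ)) :
    span ℚ (ratify '' (intSpan A : Set (Fin n → ℤ))) = span ℚ (ratify '' A) :=
  le_antisymm (span_le.2 <| Set.image_subset_iff.2 fun _ => ratify_mem_span)
    (span_mono <| Set.image_mono AddSubgroup.subset_closure)

theorem exists_zsmul_eq_ratify_of_mem_span {A : Set (Fin n → ℤ)} {x : Fin n → ℚ}
    (hx : x ∈ span ℚ (ratify '' A)) :
    ∃ N : ℤ, N ≠ 0 ∧ ∃ w ∈ intSpan A, (N : ℚ) • x = ratify w := by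
  induction hx using span_induction with
  | mem y hy =>
    obtain ⟨v, hv, rfl⟩ := hy
    exact ⟨1, one_ne_zero, v, AddSubgroup.subset_closure hv, by simp⟩
  | zero => exact ⟨1, one_ne_zero, 0, zero_mem _, by simp⟩
  | add x y _ _ hx hy =>
    obtain ⟨N₁, hN₁, w₁, hw₁, he₁⟩ := hx
    obtain ⟨N₂, hN₂, w₂, hw₂, he₂⟩ := hy
    refine ⟨N₁ * N₂, mul_ne_zero hN₁ hN₂, N₂ • w₁ + N₁ • w₂,
      add_mem (zsmul_mem hw₁ N₂) (zsmul_mem hw₂ N₁), ?_⟩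
    rw [ratify_add, ratify_zsmul, ratify_zsmul, ← he₁, ← he₂]
    push_cast
    module
  | smul q x _ hx =>
    obtain ⟨N, hN, w, hw, he⟩ := hx
    refine ⟨N * q.den, mul_ne_zero hN (by exact_mod_cast q.den_ne_zero), q.num • w,
      zsmul_mem hw q.num, ?_⟩
    rw [ratify_zsmul, ← he, smul_smul, smul_smul, ← Rat.mul_den_eq_num q]
    push_cast
    ring_nf

theorem span_ratify_inf_span_ratify (A₁ A₂ : Set (Fin n → ℤ)) :
    span ℚ (ratify '' A₁) ⊓ span ℚ (ratify '' A₂) =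
      span ℚ (ratify '' (intSpan A₁ ⊓ intSpan A₂ : AddSubgroup (Fin n → ℤ))) := by
  refine le_antisymm ?_ (le_inf ?_ ?_)
  · rintro x ⟨hx₁, hx₂⟩
    obtain ⟨N₁, hN₁, w₁, hw₁, he₁⟩ := exists_zsmul_eq_ratify_of_mem_span hx₁
    obtain ⟨N₂, hN₂, w₂, hw₂, he₂⟩ := exists_zsmul_eq_ratify_of_mem_span hx₂
    have hw : N₂ • w₁ = N₁ • w₂ := ratify_injective <| by
      rw [ratify_zsmul, ratify_zsmul, ← he₁, ← he₂, smul_smul, smul_smul, mul_comm]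
    have hN : ((N₂ * N₁ : ℤ) : ℚ) ≠ 0 := by exact_mod_cast mul_ne_zero hN₂ hN₁
    have hx : x = ((N₂ * N₁ : ℤ) : ℚ)⁻¹ • ratify (N₂ • w₁) := by
      rw [ratify_zsmul, ← he₁, smul_smul (N₂ : ℚ), ← Int.cast_mul, inv_smul_smul₀ hN]
    rw [hx]
    exact smul_mem _ _ <| subset_span <|
      Set.mem_image_of_mem _ ⟨zsmul_mem hw₁ N₂, hw ▸ zsmul_mem hw₂ N₁⟩
  · exact (span_mono (Set.image_mono fun _ hx => hx.1)).trans (span_ratify_intSpan A₁).le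
  · exact (span_mono (Set.image_mono fun _ hx => hx.2)).trans (span_ratify_intSpan A₂).le

end Ratify

theorem gluing_gives_directSum_general {n m : ℕ} (A : Fin m → (Fin n → ℤ))
    (E₁ E₂ : Set (Fin m))
    (hcover : E₁ ∪ E₂ = Set.univ)
    (hglue : IsGluing (A '' E₁) (A '' E₂)) :
    IsDirectSum (posSpan (ratify '' (A '' E₁))) (posSpan (ratify '' (A '' E₂)))
      (posSpan (ratify '' Set.range A)) := by
  obtain ⟨a, -, ⟨ha₁, ha₂⟩, hZ⟩ := hglue
  refine ⟨ratify a, ⟨ratify_mem_posSpan ha₁, ratify_mem_posSpan ha₂⟩, ?_, ?_⟩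
  · rw [span_posSpan, span_posSpan, span_ratify_inf_span_ratify, ← hZ, span_ratify_intSpan,
      Set.image_singleton]
  · rw [posSpan_union_posSpan, ← Set.image_union, ← Set.image_union, hcover, Set.image_univ]

/-- If the affine semigroup `ℕA` is the gluing of `ℕA^{E₁}` and `ℕA^{E₂}`,
then the cone of `A` is the direct sum of the cones of `A^{E₁}` and `A^{E₂}`. -/
theorem gluing_gives_directSum {n m : ℕ} (A : Fin m → (Fin n → ℤ))
    (haff : IsAffineSemigroup (Set.range A))
    (E₁ E₂ : Set (Fin m)) (hne₁ : E₁.Nonempty) (hne₂ : E₂.Nonempty)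
    (hcover : E₁ ∪ E₂ = Set.univ) (hdisj : E₁ ∩ E₂ = ∅)
    (hglue : IsGluing (A '' E₁) (A '' E₂)) :
    IsDirectSum (posSpan (ratify '' (A '' E₁))) (posSpan (ratify '' (A '' E₂)))
      (posSpan (ratify '' Set.range A)) :=
  gluing_gives_directSum_general A E₁ E₂ hcover hglue
end

section
/- Every cone in the smallest class of rational cones closed under direct sum and containing all rational simplex cones is strongly convex. -/
open scoped BigOperators

/-- General bipyramidal cones: the smallest class of cones containing all
2-simplex cones and closed under direct sum of internal type. -/
inductive GenBipyramidal {n : ℕ} : Set (Fin n → ℚ) → Prop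
  | simplex2 (r₁ r₂ : Fin n → ℚ) (h : LinearIndependent ℚ ![r₁, r₂]) :
      GenBipyramidal (posSpan {r₁, r₂})
  | internal (σ₁ σ₂ : Set (Fin n → ℚ)) (a : Fin n → ℚ)
      (h₁ : GenBipyramidal σ₁) (h₂ : GenBipyramidal σ₂)
      (hds : IsDirectSumAlong σ₁ σ₂ (posSpan (σ₁ ∪ σ₂)) a)
      (hint₁ : ¬ OnExtremeRay σ₁ a) (hint₂ : ¬ OnExtremeRay σ₂ a) :
      GenBipyramidal (posSpan (σ₁ ∪ σ₂))

/-- The smallest class of cones containing all rational simplex cones and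
closed under direct sum (the class of complete intersection cones). -/
inductive CICone {n : ℕ} : Set (Fin n → ℚ) → Prop
  | simplex (s : ℕ) (r : Fin s → (Fin n → ℚ)) (h : LinearIndependent ℚ r) :
      CICone (posSpan (Set.range r))
  | dsum (σ₁ σ₂ : Set (Fin n → ℚ)) (h₁ : CICone σ₁) (h₂ : CICone σ₂)
      (hds : IsDirectSum σ₁ σ₂ (posSpan (σ₁ ∪ σ₂))) :
      CICone (posSpan (σ₁ ∪ σ₂))

section aux
variable {n : ℕ} {S A B : Set (Fin n → ℚ)}

lemma zero_mem_posSpan : (0 : Fin n → ℚ) ∈ posSpan S := by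
  exact ⟨0, (fun i => 0), (fun i => 0), fun i => le_refl _, fun i => i.elim0, by simp⟩

lemma mem_posSpan_of_mem {s : Fin n → ℚ} (hs : s ∈ S) : s ∈ posSpan S :=
  ⟨1, fun _ => 1, fun _ => s, fun _ => zero_le_one, fun _ => hs, by simp⟩

lemma posSpan_add {x y : Fin n → ℚ} (hx : x ∈ posSpan S) (hy : y ∈ posSpan S) :
    x + y ∈ posSpan S := by
  obtain ⟨k₁, c₁, b₁, hc₁, hb₁, hx⟩ := hx
  obtain ⟨k₂, c₂, b₂, hc₂, hb₂, hy⟩ := hy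
  refine ⟨k₁ + k₂, Fin.append c₁ c₂, Fin.append b₁ b₂, ?_, ?_, ?_⟩
  · intro i
    refine Fin.addCases (fun j => ?_) (fun j => ?_) i
    · simpa using hc₁ j
    · simpa using hc₂ j
  · intro i
    refine Fin.addCases (fun j => ?_) (fun j => ?_) i
    · simpa using hb₁ j
    · simpa using hb₂ j
  · rw [hx, hy]
    rw [Fin.sum_univ_add (f := fun i => Fin.append c₁ c₂ i • Fin.append b₁ b₂ i)]
    simp

lemma posSpan_smul {q : ℚ} {x : Fin n → ℚ} (hq : 0 ≤ q) (hx : x ∈ posSpan S) :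
    q • x ∈ posSpan S := by
  obtain ⟨k, c, b, hc, hb, hx⟩ := hx
  refine ⟨k, fun i => q * c i, b, fun i => mul_nonneg hq (hc i), hb, ?_⟩
  rw [hx, Finset.smul_sum]
  simp [smul_smul]

lemma posSpan_mono (h : A ⊆ B) : posSpan A ⊆ posSpan B := by
  rintro x ⟨k, c, b, hc, hb, hx⟩
  exact ⟨k, c, b, hc, fun i => h (hb i), hx⟩

lemma posSpan_idem : posSpan (posSpan S) = posSpan S := by
  apply Set.Subset.antisymm
  · rintro x ⟨k, c, b, hc, hb, rfl⟩
    exact Finset.sum_induction _ (· ∈ posSpan S) (fun _ _ => posSpan_add)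
      zero_mem_posSpan (fun i _ => posSpan_smul (hc i) (hb i))
  · exact posSpan_mono (fun s hs => mem_posSpan_of_mem hs)

lemma posSpan_subset_span : posSpan S ⊆ (Submodule.span ℚ S : Set (Fin n → ℚ)) := by
  rintro x ⟨k, c, b, hc, hb, rfl⟩
  exact Submodule.sum_mem _ fun i _ =>
    Submodule.smul_mem _ _ (Submodule.subset_span (hb i))

lemma posSpan_union_split {x : Fin n → ℚ} (hx : x ∈ posSpan (A ∪ B)) :
    ∃ u ∈ posSpan A, ∃ v ∈ posSpan B, x = u + v := by
  obtain ⟨k, c, b, hc, hb, rfl⟩ := hx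
  induction k with
  | zero => exact ⟨0, zero_mem_posSpan, 0, zero_mem_posSpan, by simp⟩
  | succ k ih =>
    obtain ⟨u, hu, v, hv, huv⟩ := ih (c ∘ Fin.succ) (b ∘ Fin.succ)
      (fun i => hc i.succ) (fun i => hb i.succ)
    simp only [Function.comp] at huv
    rw [Fin.sum_univ_succ]
    rcases hb 0 with h0 | h0
    · exact ⟨c 0 • b 0 + u, posSpan_add (posSpan_smul (hc 0) (mem_posSpan_of_mem h0)) hu,
        v, hv, by rw [huv]; abel⟩
    · exact ⟨u, hu, c 0 • b 0 + v,
        posSpan_add (posSpan_smul (hc 0) (mem_posSpan_of_mem h0)) hv, by rw [huv]; abel⟩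

end aux

open Classical in
lemma li_nonneg_comb_zero {n s : ℕ} {r : Fin s → (Fin n → ℚ)}
    (h : LinearIndependent ℚ r) {m : ℕ} (c : Fin m → ℚ) (g : Fin m → Fin s)
    (hc : ∀ i, 0 ≤ c i) (hsum : ∑ i, c i • r (g i) = 0) : ∀ i, c i = 0 := by
  set d : Fin s → ℚ := fun j => ∑ i ∈ Finset.univ.filter (fun i => g i = j), c i with hd
  have hdsum : ∑ j, d j • r j = 0 := by
    rw [← hsum, ← Finset.sum_fiberwise Finset.univ g (fun i => c i • r (g i))]
    refine Finset.sum_congr rfl fun j _ => ?_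
    rw [hd, Finset.sum_smul]
    refine Finset.sum_congr rfl fun i hi => ?_
    rw [(Finset.mem_filter.mp hi).2]
  have hdz : ∀ j, d j = 0 := Fintype.linearIndependent_iff.mp h d hdsum
  intro i
  have hdi := hdz (g i)
  rw [hd] at hdi
  have hz := (Finset.sum_eq_zero_iff_of_nonneg (fun i' _ => hc i')).mp hdi
  exact hz i (Finset.mem_filter.mpr ⟨Finset.mem_univ i, rfl⟩)

/-- Every cone in the smallest class closed under direct sum containing all
rational simplex cones is strongly convex. -/
theorem ciCone_stronglyConvex {n : ℕ} (σ : Set (Fin n → ℚ)) (hσ : CICone σ) :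
    StronglyConvex σ := by
  induction hσ with
  | simplex s r h =>
    intro x hx hnx
    obtain ⟨k₁, c₁, b₁, hc₁, hb₁, hx⟩ := hx
    obtain ⟨k₂, c₂, b₂, hc₂, hb₂, hnx⟩ := hnx
    have hbg : ∀ i : Fin (k₁ + k₂), ∃ j, r j = Fin.append b₁ b₂ i := by
      intro i
      refine Fin.addCases (fun j => ?_) (fun j => ?_) i
      · simpa using hb₁ j
      · simpa using hb₂ j
    choose g hg using hbg
    have hsum : ∑ i, Fin.append c₁ c₂ i • r (g i) = 0 := by
      have hsum0 : ∑ i, Fin.append c₁ c₂ i • Fin.append b₁ b₂ i = 0 := by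
        rw [Fin.sum_univ_add (f := fun i => Fin.append c₁ c₂ i • Fin.append b₁ b₂ i)]
        simp [← hx, ← hnx]
      rw [← hsum0]
      exact Finset.sum_congr rfl fun i _ => by rw [hg i]
    have hcn : ∀ i : Fin (k₁ + k₂), 0 ≤ Fin.append c₁ c₂ i := by
      intro i
      refine Fin.addCases (fun j => ?_) (fun j => ?_) i
      · simpa using hc₁ j
      · simpa using hc₂ j
    have hz := li_nonneg_comb_zero h _ g hcn hsum
    have hz₁ : ∀ j : Fin k₁, c₁ j = 0 := by
      intro j; have := hz (Fin.castAdd k₂ j); simpa using this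
    rw [hx]
    exact Finset.sum_eq_zero fun i _ => by rw [hz₁ i, zero_smul]
  | dsum σ₁ σ₂ h₁ h₂ hds ih₁ ih₂ =>
    obtain ⟨a, ⟨ha₁, ha₂⟩, hspan, -⟩ := hds
    have hps₁ : posSpan σ₁ = σ₁ := by
      obtain (⟨s, r, hli⟩ | ⟨τ₁, τ₂, -, -, -⟩) := h₁ <;> exact posSpan_idem
    have hps₂ : posSpan σ₂ = σ₂ := by
      obtain (⟨s, r, hli⟩ | ⟨τ₁, τ₂, -, -, -⟩) := h₂ <;> exact posSpan_idem
    intro x hx hnx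
    obtain ⟨u₁, hu₁, u₂, hu₂, hxu⟩ := posSpan_union_split hx
    obtain ⟨v₁, hv₁, v₂, hv₂, hxv⟩ := posSpan_union_split hnx
    rw [hps₁] at hu₁ hv₁
    rw [hps₂] at hu₂ hv₂
    have h0 : (u₁ + v₁) + (u₂ + v₂) = 0 := by
      rw [show (u₁ + v₁) + (u₂ + v₂) = (u₁ + u₂) + (v₁ + v₂) from by abel, ← hxu, ← hxv]
      abel
    have hwneg : u₂ + v₂ = -(u₁ + v₁) := eq_neg_of_add_eq_zero_right h0
    have hw1 : u₁ + v₁ ∈ σ₁ := by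
      rw [← hps₁]; exact posSpan_add (mem_posSpan_of_mem hu₁) (mem_posSpan_of_mem hv₁)
    have hw2 : u₂ + v₂ ∈ σ₂ := by
      rw [← hps₂]; exact posSpan_add (mem_posSpan_of_mem hu₂) (mem_posSpan_of_mem hv₂)
    have hwspan : u₁ + v₁ ∈ Submodule.span ℚ {a} := by
      rw [← hspan]
      refine Submodule.mem_inf.mpr ⟨Submodule.subset_span hw1, ?_⟩
      have : -(u₁ + v₁) ∈ Submodule.span ℚ σ₂ := by
        rw [← hwneg]; exact Submodule.subset_span hw2
      simpa using Submodule.neg_mem _ this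
    obtain ⟨t, ht⟩ := Submodule.mem_span_singleton.mp hwspan
    have hwz : u₁ + v₁ = 0 := by
      rcases le_or_gt 0 t with htn | htn
      · refine ih₂ (u₁ + v₁) ?_ ?_
        · rw [← ht, ← hps₂]; exact posSpan_smul htn (mem_posSpan_of_mem ha₂)
        · rw [← hwneg]; exact hw2
      · have hma : (-t) • a ∈ σ₁ := by
          rw [← hps₁]; exact posSpan_smul (by linarith) (mem_posSpan_of_mem ha₁)
        have hmna : -((-t) • a) ∈ σ₁ := by
          have : -((-t) • a) = u₁ + v₁ := by rw [← ht]; module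
          rw [this]; exact hw1
        have := ih₁ _ hma hmna
        rw [← ht]
        calc t • a = -((-t) • a) := by module
          _ = -0 := by rw [this]
          _ = 0 := by simp
    have hu1z : u₁ = 0 := by
      refine ih₁ u₁ hu₁ ?_
      have : -u₁ = v₁ := (eq_neg_of_add_eq_zero_right hwz).symm
      rw [this]; exact hv₁
    have hu2z : u₂ = 0 := by
      refine ih₂ u₂ hu₂ ?_
      have hw2z : u₂ + v₂ = 0 := by rw [hwneg, hwz]; simp
      have : -u₂ = v₂ := (eq_neg_of_add_eq_zero_right hw2z).symm
      rw [this]; exact hv₂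
    rw [hxu, hu1z, hu2z]; simp
end
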